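/- Lemma 4.1 (control of the backward diffusion term): Let φ be a grid function such that φ and Δ_h φ (extended to ghost cells via its own discrete Neumann BC) both satisfy the discrete Neumann BC. Then for every ε > 0, ‖Δ_h φ‖_m^2 ≤ (1/(3ε^2)) ‖φ‖_m^2 + (2ε/3) ‖∇_h(Δ_h φ)‖^2. -/

import Mathlib

/-! Write `A = ‖Δ_h φ‖²`, `P = ‖φ‖²`, `G = ‖∇_h φ‖²` and `H = ‖∇_h Δ_h φ‖²`. Summation by parts,
whose boundary terms vanish by the Neumann condition on `φ`, gives `A = -(∇_h Δ_h φ, ∇_h φ)` and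
`G = -(φ, Δ_h φ)`; Cauchy–Schwarz then yields `A² ≤ G H` and `G² ≤ P A`, hence `A³ ≤ P H²`.
The three-term AM–GM inequality for `P, t, t` with `t = ε³ H` turns this into
`3 ε² A ≤ P + 2 ε³ H`. -/

open Finset

/-- Discrete inner product `(f,g)_m` over interior cells `i = 1,...,Nx`, `j = 1,...,Ny`. -/
noncomputable def innerM (Nx Ny : ℕ) (hx hy : ℝ) (f g : ℕ → ℕ → ℝ) : ℝ :=
  ∑ i ∈ Finset.Icc 1 Nx, ∑ j ∈ Finset.Icc 1 Ny, hx * hy * f i j * g i j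

/-- Discrete inner product `(u,v)_x` for x-edge arrays; index `i` stands for `i + 1/2`. -/
noncomputable def innerX (Nx Ny : ℕ) (hx hy : ℝ) (u v : ℕ → ℕ → ℝ) : ℝ :=
  ∑ i ∈ Finset.Icc 1 (Nx - 1), ∑ j ∈ Finset.Icc 1 Ny, hx * hy * u i j * v i j

/-- Discrete inner product `(u,v)_y` for y-edge arrays; index `j` stands for `j + 1/2`. -/
noncomputable def innerY (Nx Ny : ℕ) (hx hy : ℝ) (u v : ℕ → ℕ → ℝ) : ℝ :=
  ∑ i ∈ Finset.Icc 1 Nx, ∑ j ∈ Finset.Icc 1 (Ny - 1), hx * hy * u i j * v i j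

/-- `[d_x g]_{i+1/2, j}`, stored at index `(i, j)`. -/
noncomputable def dX (hx : ℝ) (g : ℕ → ℕ → ℝ) : ℕ → ℕ → ℝ := fun i j => (g (i + 1) j - g i j) / hx

/-- `[d_y g]_{i, j+1/2}`, stored at index `(i, j)`. -/
noncomputable def dY (hy : ℝ) (g : ℕ → ℕ → ℝ) : ℕ → ℕ → ℝ := fun i j => (g i (j + 1) - g i j) / hy

/-- `[D_x w]_{i,j} = (w_{i+1/2,j} - w_{i-1/2,j})/h_x` for an x-edge array `w`. -/
noncomputable def DX (hx : ℝ) (w : ℕ → ℕ → ℝ) : ℕ → ℕ → ℝ := fun i j => (w i j - w (i - 1) j) / hx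

/-- `[D_y w]_{i,j} = (w_{i,j+1/2} - w_{i,j-1/2})/h_y` for a y-edge array `w`. -/
noncomputable def DY (hy : ℝ) (w : ℕ → ℕ → ℝ) : ℕ → ℕ → ℝ := fun i j => (w i j - w i (j - 1)) / hy

/-- Five-point discrete Laplacian `[Δ_h g]_{i,j}` (meaningful at interior cells). -/
noncomputable def lapH (hx hy : ℝ) (g : ℕ → ℕ → ℝ) : ℕ → ℕ → ℝ := fun i j =>
  (g (i + 1) j - 2 * g i j + g (i - 1) j) / hx ^ 2 +
  (g i (j + 1) - 2 * g i j + g i (j - 1)) / hy ^ 2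

/-- The discrete homogeneous Neumann boundary condition for a grid function. -/
noncomputable def NeumannBC (Nx Ny : ℕ) (g : ℕ → ℕ → ℝ) : Prop :=
  (∀ j ∈ Finset.Icc 1 Ny, g 0 j = g 1 j ∧ g (Nx + 1) j = g Nx j) ∧
  (∀ i ∈ Finset.Icc 1 Nx, g i 0 = g i 1 ∧ g i (Ny + 1) = g i Ny)

/-- Extension of interior data to ghost cells via the discrete Neumann BC
(clamping of indices to the interior range). -/
noncomputable def extN (Nx Ny : ℕ) (u : ℕ → ℕ → ℝ) : ℕ → ℕ → ℝ := fun i j =>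
  u (min (max i 1) Nx) (min (max j 1) Ny)

/-- `‖∇_h g‖² = (d_x g, d_x g)_x + (d_y g, d_y g)_y`. -/
noncomputable def gradSq (Nx Ny : ℕ) (hx hy : ℝ) (g : ℕ → ℕ → ℝ) : ℝ :=
  innerX Nx Ny hx hy (dX hx g) (dX hx g) + innerY Nx Ny hx hy (dY hy g) (dY hy g)

/-- `Δ_h² g`, where `Δ_h g` is extended to ghost cells via its own Neumann BC. -/
noncomputable def lap2H (Nx Ny : ℕ) (hx hy : ℝ) (g : ℕ → ℕ → ℝ) : ℕ → ℕ → ℝ :=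
  lapH hx hy (extN Nx Ny (lapH hx hy g))

/-- `Δ_h³ g`, where `Δ_h g`, `Δ_h² g` are extended to ghost cells via their own Neumann BC. -/
noncomputable def lap3H (Nx Ny : ℕ) (hx hy : ℝ) (g : ℕ → ℕ → ℝ) : ℕ → ℕ → ℝ :=
  lapH hx hy (extN Nx Ny (lap2H Nx Ny hx hy g))

/-- Discrete energy `E_1^h(g) = Σ h_x h_y F(g_{ij})` with `F(s) = s⁴/4`. -/
noncomputable def E1h (Nx Ny : ℕ) (hx hy : ℝ) (g : ℕ → ℕ → ℝ) : ℝ :=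
  ∑ i ∈ Finset.Icc 1 Nx, ∑ j ∈ Finset.Icc 1 Ny, hx * hy * (g i j ^ 4 / 4)

section Abel

variable {R : Type*} [CommRing R]

theorem sum_Icc_mul_sub_pred (F D : ℕ → R) (h0 : D 0 = 0) (N : ℕ) :
    ∑ i ∈ Icc 1 N, F i * (D i - D (i - 1)) =
      F N * D N - ∑ i ∈ Icc 1 (N - 1), (F (i + 1) - F i) * D i := by
  induction N with
  | zero => simp [h0]
  | succ N ih =>
    rw [sum_Icc_succ_top (by omega), ih, Nat.add_sub_cancel]
    rcases N with _ | M
    · simp [h0]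
    · rw [sum_Icc_succ_top (by omega : 1 ≤ M + 1), Nat.add_sub_cancel]
      ring

end Abel

section OrderedRing

variable {R ι κ : Type*} [CommRing R] [LinearOrder R] [IsStrictOrderedRing R]

theorem sum_sum_mul_sq_le_mul (s : Finset ι) (t : Finset κ) {c : R} (hc : 0 ≤ c)
    (u v : ι → κ → R) :
    (∑ i ∈ s, ∑ j ∈ t, c * u i j * v i j) ^ 2 ≤
      (∑ i ∈ s, ∑ j ∈ t, c * u i j * u i j) * ∑ i ∈ s, ∑ j ∈ t, c * v i j * v i j := by
  have hself : ∀ w : ι → κ → R, ∀ i j, 0 ≤ c * w i j * w i j := fun w i j => by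
    rw [mul_assoc]; exact mul_nonneg hc (mul_self_nonneg _)
  refine sum_sq_le_sum_mul_sum_of_sq_le_mul s (fun i _ => sum_nonneg fun j _ => hself u i j)
    (fun i _ => sum_nonneg fun j _ => hself v i j) fun i _ => ?_
  exact sum_sq_le_sum_mul_sum_of_sq_le_mul t (fun j _ => hself u i j) (fun j _ => hself v i j)
    fun j _ => le_of_eq (by ring)

theorem add_sq_le_add_mul_add {a b p q r s : R} (hp : 0 ≤ p) (hq : 0 ≤ q) (hr : 0 ≤ r)
    (hs : 0 ≤ s) (ha : a ^ 2 ≤ p * r) (hb : b ^ 2 ≤ q * s) :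
    (a + b) ^ 2 ≤ (p + q) * (r + s) := by
  have hab : (a * b) ^ 2 ≤ (p * s) * (q * r) := by
    calc (a * b) ^ 2 = a ^ 2 * b ^ 2 := mul_pow a b 2
      _ ≤ (p * r) * (q * s) := mul_le_mul ha hb (sq_nonneg b) (mul_nonneg hp hr)
      _ = (p * s) * (q * r) := by ring
  have := two_mul_le_add_of_sq_le_mul (mul_nonneg hp hs) (mul_nonneg hq hr) hab
  nlinarith

theorem cube_le_of_sq_le_mul {A G H P : R} (hP : 0 ≤ P) (hA : A ^ 2 ≤ G * H)
    (hG : G ^ 2 ≤ P * A) : A ^ 3 ≤ P * H ^ 2 := by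
  have hA0 : 0 ≤ A := by
    by_contra! hneg
    have hG0 : G = 0 := pow_eq_zero_iff two_ne_zero |>.mp <|
      le_antisymm (hG.trans (mul_nonpos_of_nonneg_of_nonpos hP hneg.le)) (sq_nonneg G)
    rw [hG0, zero_mul] at hA
    exact hA.not_gt (sq_pos_of_neg hneg)
  rcases hA0.eq_or_lt with rfl | hApos
  · rw [zero_pow three_ne_zero]; positivity
  refine le_of_mul_le_mul_left ?_ hApos
  calc A * A ^ 3 = (A ^ 2) ^ 2 := by ring
    _ ≤ (G * H) ^ 2 := pow_le_pow_left₀ (sq_nonneg A) hA 2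
    _ = G ^ 2 * H ^ 2 := by ring
    _ ≤ (P * A) * H ^ 2 := mul_le_mul_of_nonneg_right hG (sq_nonneg H)
    _ = A * (P * H ^ 2) := by ring

end OrderedRing

theorem le_of_cube_le_mul_sq {K : Type*} [Field K] [LinearOrder K] [IsStrictOrderedRing K]
    {A P H ε : K} (hP : 0 ≤ P) (hH : 0 ≤ H) (hε : 0 < ε)
    (h : A ^ 3 ≤ P * H ^ 2) : A ≤ 1 / (3 * ε ^ 2) * P + 2 * ε / 3 * H := by
  set t := ε ^ 3 * H
  have ht : 0 ≤ t := by positivity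
  -- AM-GM for `P, t, t`: `(P + 2t)³ - 27 P t² = (P - t)² (P + 8t)`.
  have hcube : (3 * ε ^ 2 * A) ^ 3 ≤ (P + 2 * t) ^ 3 := by
    have hamgm : 0 ≤ (P - t) ^ 2 * (P + 8 * t) := by positivity
    have : (3 * ε ^ 2 * A) ^ 3 ≤ 27 * P * t ^ 2 := by
      calc (3 * ε ^ 2 * A) ^ 3 = 27 * ε ^ 6 * A ^ 3 := by ring
        _ ≤ 27 * ε ^ 6 * (P * H ^ 2) := by gcongr
        _ = 27 * P * t ^ 2 := by ring
    nlinarith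
  have key := le_of_pow_le_pow_left₀ three_ne_zero (by positivity) hcube
  rw [show 1 / (3 * ε ^ 2) * P + 2 * ε / 3 * H = (P + 2 * t) / (3 * ε ^ 2) by
    field_simp; ring, le_div_iff₀ (by positivity)]
  linarith

section Grid

variable {Nx Ny : ℕ} {hx hy : ℝ}

noncomputable def gradInner (Nx Ny : ℕ) (hx hy : ℝ) (f g : ℕ → ℕ → ℝ) : ℝ :=
  innerX Nx Ny hx hy (dX hx f) (dX hx g) + innerY Nx Ny hx hy (dY hy f) (dY hy g)

theorem gradSq_eq_gradInner (g : ℕ → ℕ → ℝ) :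
    gradSq Nx Ny hx hy g = gradInner Nx Ny hx hy g g := rfl

theorem innerM_congr {f f' g g' : ℕ → ℕ → ℝ}
    (hf : ∀ i ∈ Icc 1 Nx, ∀ j ∈ Icc 1 Ny, f i j = f' i j)
    (hg : ∀ i ∈ Icc 1 Nx, ∀ j ∈ Icc 1 Ny, g i j = g' i j) :
    innerM Nx Ny hx hy f g = innerM Nx Ny hx hy f' g' :=
  sum_congr rfl fun i hi => sum_congr rfl fun j hj => by rw [hf i hi j hj, hg i hi j hj]

theorem extN_eq_of_mem (u : ℕ → ℕ → ℝ) {i j : ℕ} (hi : i ∈ Icc 1 Nx) (hj : j ∈ Icc 1 Ny) :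
    extN Nx Ny u i j = u i j := by
  rw [mem_Icc] at hi hj
  simp only [extN, max_eq_left hi.1, min_eq_left hi.2, max_eq_left hj.1, min_eq_left hj.2]

theorem innerM_add_right (f u v : ℕ → ℕ → ℝ) :
    innerM Nx Ny hx hy f (u + v) = innerM Nx Ny hx hy f u + innerM Nx Ny hx hy f v := by
  simp only [innerM, Pi.add_apply, mul_add, ← sum_add_distrib]

theorem innerM_self_nonneg (hxy : 0 ≤ hx * hy) (f : ℕ → ℕ → ℝ) :
    0 ≤ innerM Nx Ny hx hy f f :=
  sum_nonneg fun i _ => sum_nonneg fun j _ => by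
    rw [mul_assoc]; exact mul_nonneg hxy (mul_self_nonneg _)

theorem gradSq_nonneg (hxy : 0 ≤ hx * hy) (g : ℕ → ℕ → ℝ) : 0 ≤ gradSq Nx Ny hx hy g := by
  have hself : ∀ u : ℕ → ℕ → ℝ, ∀ i j, 0 ≤ hx * hy * u i j * u i j := fun u i j => by
    rw [mul_assoc]; exact mul_nonneg hxy (mul_self_nonneg _)
  exact add_nonneg (sum_nonneg fun i _ => sum_nonneg fun j _ => hself _ i j)
    (sum_nonneg fun i _ => sum_nonneg fun j _ => hself _ i j)

theorem innerM_sq_le (hxy : 0 ≤ hx * hy) (f g : ℕ → ℕ → ℝ) :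
    innerM Nx Ny hx hy f g ^ 2 ≤ innerM Nx Ny hx hy f f * innerM Nx Ny hx hy g g :=
  sum_sum_mul_sq_le_mul _ _ hxy f g

theorem gradInner_sq_le (hxy : 0 ≤ hx * hy) (f g : ℕ → ℕ → ℝ) :
    gradInner Nx Ny hx hy f g ^ 2 ≤ gradSq Nx Ny hx hy f * gradSq Nx Ny hx hy g := by
  have hself : ∀ u : ℕ → ℕ → ℝ, ∀ i j, 0 ≤ hx * hy * u i j * u i j := fun u i j => by
    rw [mul_assoc]; exact mul_nonneg hxy (mul_self_nonneg _)
  exact add_sq_le_add_mul_add (sum_nonneg fun i _ => sum_nonneg fun j _ => hself _ i j)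
    (sum_nonneg fun i _ => sum_nonneg fun j _ => hself _ i j)
    (sum_nonneg fun i _ => sum_nonneg fun j _ => hself _ i j)
    (sum_nonneg fun i _ => sum_nonneg fun j _ => hself _ i j)
    (sum_sum_mul_sq_le_mul _ _ hxy _ _) (sum_sum_mul_sq_le_mul _ _ hxy _ _)

theorem innerM_DX_of_eq_zero (f w : ℕ → ℕ → ℝ)
    (hw : ∀ j ∈ Icc 1 Ny, w 0 j = 0 ∧ w Nx j = 0) :
    innerM Nx Ny hx hy f (DX hx w) = -innerX Nx Ny hx hy (dX hx f) w := by
  unfold innerM innerX DX dX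
  rw [sum_comm, sum_comm (s := Icc 1 (Nx - 1)), ← sum_neg_distrib]
  refine sum_congr rfl fun j hj => ?_
  have h := sum_Icc_mul_sub_pred (fun i => f i j) (fun i => w i j) (hw j hj).1 Nx
  simp only [(hw j hj).2, mul_zero, zero_sub] at h
  calc ∑ i ∈ Icc 1 Nx, hx * hy * f i j * ((w i j - w (i - 1) j) / hx)
      = hx * hy / hx * ∑ i ∈ Icc 1 Nx, f i j * (w i j - w (i - 1) j) := by
        rw [mul_sum]; exact sum_congr rfl fun i _ => by ring
    _ = -∑ i ∈ Icc 1 (Nx - 1), hx * hy * ((f (i + 1) j - f i j) / hx) * w i j := by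
        rw [h, mul_neg, mul_sum]; exact congrArg _ (sum_congr rfl fun i _ => by ring)

theorem innerM_DY_of_eq_zero (f w : ℕ → ℕ → ℝ)
    (hw : ∀ i ∈ Icc 1 Nx, w i 0 = 0 ∧ w i Ny = 0) :
    innerM Nx Ny hx hy f (DY hy w) = -innerY Nx Ny hx hy (dY hy f) w := by
  unfold innerM innerY DY dY
  rw [← sum_neg_distrib]
  refine sum_congr rfl fun i hi => ?_
  have h := sum_Icc_mul_sub_pred (fun j => f i j) (fun j => w i j) (hw i hi).1 Ny
  simp only [(hw i hi).2, mul_zero, zero_sub] at h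
  calc ∑ j ∈ Icc 1 Ny, hx * hy * f i j * ((w i j - w i (j - 1)) / hy)
      = hx * hy / hy * ∑ j ∈ Icc 1 Ny, f i j * (w i j - w i (j - 1)) := by
        rw [mul_sum]; exact sum_congr rfl fun j _ => by ring
    _ = -∑ j ∈ Icc 1 (Ny - 1), hx * hy * ((f i (j + 1) - f i j) / hy) * w i j := by
        rw [h, mul_neg, mul_sum]; exact congrArg _ (sum_congr rfl fun j _ => by ring)

theorem lapH_eq_DX_dX_add_DY_dY (g : ℕ → ℕ → ℝ) {i j : ℕ} (hi : 1 ≤ i) (hj : 1 ≤ j) :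
    lapH hx hy g i j = DX hx (dX hx g) i j + DY hy (dY hy g) i j := by
  simp only [lapH, DX, dX, DY, dY, Nat.sub_add_cancel hi, Nat.sub_add_cancel hj]
  ring

theorem NeumannBC.dX_eq_zero {g : ℕ → ℕ → ℝ} (hg : NeumannBC Nx Ny g) :
    ∀ j ∈ Icc 1 Ny, dX hx g 0 j = 0 ∧ dX hx g Nx j = 0 := fun j hj => by
  simp [dX, (hg.1 j hj).1, (hg.1 j hj).2]

theorem NeumannBC.dY_eq_zero {g : ℕ → ℕ → ℝ} (hg : NeumannBC Nx Ny g) :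
    ∀ i ∈ Icc 1 Nx, dY hy g i 0 = 0 ∧ dY hy g i Ny = 0 := fun i hi => by
  simp [dY, (hg.2 i hi).1, (hg.2 i hi).2]

theorem innerM_lapH {g : ℕ → ℕ → ℝ} (hg : NeumannBC Nx Ny g) (f : ℕ → ℕ → ℝ) :
    innerM Nx Ny hx hy f (lapH hx hy g) = -gradInner Nx Ny hx hy f g := by
  rw [innerM_congr (g' := DX hx (dX hx g) + DY hy (dY hy g)) (fun _ _ _ _ => rfl)
      fun i hi j hj => lapH_eq_DX_dX_add_DY_dY g (mem_Icc.mp hi).1 (mem_Icc.mp hj).1,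
    innerM_add_right, innerM_DX_of_eq_zero f _ hg.dX_eq_zero,
    innerM_DY_of_eq_zero f _ hg.dY_eq_zero, gradInner, neg_add]

end Grid

theorem control_backward_diffusion_general
    (Nx Ny : ℕ)
    (hx hy : ℝ) (hhx : 0 < hx) (hhy : 0 < hy)
    (φ : ℕ → ℕ → ℝ) (hφ : NeumannBC Nx Ny φ)
    (ε : ℝ) (hε : 0 < ε) :
    innerM Nx Ny hx hy (lapH hx hy φ) (lapH hx hy φ) ≤
      1 / (3 * ε ^ 2) * innerM Nx Ny hx hy φ φ +
      2 * ε / 3 * gradSq Nx Ny hx hy (extN Nx Ny (lapH hx hy φ)) := by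
  set L := lapH hx hy φ
  set ψ := extN Nx Ny L
  have hxy : 0 ≤ hx * hy := by positivity
  have hP : 0 ≤ innerM Nx Ny hx hy φ φ := innerM_self_nonneg hxy φ
  have hL : innerM Nx Ny hx hy L L = -gradInner Nx Ny hx hy ψ φ := by
    rw [← innerM_lapH hφ ψ]
    exact innerM_congr (fun i hi j hj => (extN_eq_of_mem L hi hj).symm) fun _ _ _ _ => rfl
  have hφ_grad : gradSq Nx Ny hx hy φ = -innerM Nx Ny hx hy φ L := by
    rw [innerM_lapH hφ, neg_neg, gradSq_eq_gradInner]
  have hL_sq : innerM Nx Ny hx hy L L ^ 2 ≤ gradSq Nx Ny hx hy φ * gradSq Nx Ny hx hy ψ := by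
    rw [hL, neg_sq, mul_comm]
    exact gradInner_sq_le hxy ψ φ
  have hφ_grad_sq : gradSq Nx Ny hx hy φ ^ 2 ≤ innerM Nx Ny hx hy φ φ * innerM Nx Ny hx hy L L := by
    rw [hφ_grad, neg_sq]
    exact innerM_sq_le hxy φ L
  exact le_of_cube_le_mul_sq hP (gradSq_nonneg hxy ψ) hε
    (cube_le_of_sq_le_mul hP hL_sq hφ_grad_sq)

/-- Lemma 4.1 (control of the backward diffusion term): if `φ` satisfies the discrete
Neumann BC (and `Δ_h φ` is extended to ghost cells via its own Neumann BC), then for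
every `ε > 0`,
`‖Δ_h φ‖_m² ≤ (1/(3ε²)) ‖φ‖_m² + (2ε/3) ‖∇_h(Δ_h φ)‖²`. -/
theorem control_backward_diffusion
    (Nx Ny : ℕ) (hNx : 1 ≤ Nx) (hNy : 1 ≤ Ny)
    (hx hy : ℝ) (hhx : 0 < hx) (hhy : 0 < hy)
    (φ : ℕ → ℕ → ℝ) (hφ : NeumannBC Nx Ny φ)
    (hlapφ : NeumannBC Nx Ny (extN Nx Ny (lapH hx hy φ)))
    (ε : ℝ) (hε : 0 < ε) :
    innerM Nx Ny hx hy (lapH hx hy φ) (lapH hx hy φ) ≤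
      1 / (3 * ε ^ 2) * innerM Nx Ny hx hy φ φ +
      2 * ε / 3 * gradSq Nx Ny hx hy (extN Nx Ny (lapH hx hy φ)) :=
  control_backward_diffusion_general Nx Ny hx hy hhx hhy φ hφ ε hε
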